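/- arXiv:2112.09170 — 3 statements merged into one kernel-verified Lean document; each statement's English description precedes it below -/
import Mathlib

section
/- Fix a treatment d, a model o, a stage t ∈ ℕ and γ with 0 ≤ γ < e_t(d). If |J̄_t(d)| ≤ γ and |f_t(d) − e_t(d)| ≤ γ, then: (1) |ζ^o_t(d) − θ(d)| ≤ Ω(γ, |ζ̄^o_0(d)|, ν^o_0(d)/t, e_t(d)); (2) ζ^o_t(d) − θ(d) ≤ Ω(γ, ζ̄^o_0(d), ν^o_0(d)/t, e_t(d)); (3) −(ζ^o_t(d) − θ(d)) ≤ Ω(γ, −ζ̄^o_0(d), ν^o_0(d)/t, e_t(d)). Moreover, on its domain (c > 0, e − a + c > 0) the function Ω(a,b,c,e) := a/(e − a + c) + b·c·( 1{b ≥ 0}/(e − a + c) + 1{b < 0}/(e + a + c) ) is increasing in a, increasing in b, decreasing in c when b = 0, decreasing in e when b ≥ 0, and Ω(0,b,c,e) = b·c/(e + c). -/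
open MeasureTheory

/-- The function `Ω(a,b,c,e) := a/(e−a+c) + b·c·(1{b≥0}/(e−a+c) + 1{b<0}/(e+a+c))`. -/
noncomputable def OmegaFun (a b c e : ℝ) : ℝ :=
  a / (e - a + c) +
    b * c * ((if 0 ≤ b then (1 : ℝ) else 0) / (e - a + c) +
      (if b < 0 then (1 : ℝ) else 0) / (e + a + c))

lemma omega_key (γ Jv b c ev fv : ℝ) (hγ : 0 ≤ γ) (hJ : Jv ≤ γ)
    (hc : 0 < c) (hf1 : ev - γ ≤ fv) (hf2 : fv ≤ ev + γ) (hpos : 0 < ev - γ + c) :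
    (Jv + c * b) / (fv + c) ≤ OmegaFun γ b c ev := by
  have hfc : 0 < fv + c := by linarith
  have h2 : 0 < ev + γ + c := by linarith
  unfold OmegaFun
  rcases le_or_gt 0 b with hb | hb
  · rw [if_pos hb, if_neg (not_lt.mpr hb)]
    have : γ / (ev - γ + c) + b * c * (1 / (ev - γ + c) + 0 / (ev + γ + c))
        = (γ + b * c) / (ev - γ + c) := by
      field_simp
      ring
    rw [this, div_le_div_iff₀ hfc hpos]
    nlinarith [mul_nonneg (sub_nonneg.2 hJ) hpos.le,
      mul_nonneg (mul_nonneg hb hc.le) (by linarith : (0:ℝ) ≤ fv - (ev - γ)),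
      mul_nonneg hγ (by linarith : (0:ℝ) ≤ fv - ev + γ)]
  · rw [if_neg (not_le.mpr hb), if_pos hb]
    have hsplit : (Jv + c * b) / (fv + c) = Jv / (fv + c) + c * b / (fv + c) := by ring
    have h3 : γ / (ev - γ + c) + b * c * (0 / (ev - γ + c) + 1 / (ev + γ + c))
        = γ / (ev - γ + c) + b * c / (ev + γ + c) := by ring
    rw [hsplit, h3]
    have hA : Jv / (fv + c) ≤ γ / (ev - γ + c) := by
      rw [div_le_div_iff₀ hfc hpos]
      nlinarith [mul_nonneg (sub_nonneg.2 hJ) hpos.le,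
        mul_nonneg hγ (by linarith : (0:ℝ) ≤ fv + c - (ev - γ + c))]
    have hB : c * b / (fv + c) ≤ b * c / (ev + γ + c) := by
      rw [div_le_div_iff₀ hfc h2]
      nlinarith [mul_nonneg (by nlinarith : (0:ℝ) ≤ -(c * b))
        (by linarith : (0:ℝ) ≤ ev + γ + c - (fv + c))]
    linarith

lemma omega_mono_b (a b₁ b₂ c ee : ℝ) (hb : b₁ ≤ b₂) (ha : 0 ≤ a) (hc : 0 < c)
    (hpos : 0 < ee - a + c) : OmegaFun a b₁ c ee ≤ OmegaFun a b₂ c ee := by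
  have h2 : 0 < ee + a + c := by linarith
  unfold OmegaFun
  rcases le_or_gt 0 b₁ with h1 | h1
  · have h1' : 0 ≤ b₂ := le_trans h1 hb
    rw [if_pos h1, if_pos h1', if_neg (not_lt.mpr h1), if_neg (not_lt.mpr h1')]
    simp only [zero_div, add_zero, mul_one_div]
    have h := (div_le_div_iff_of_pos_right hpos).mpr (mul_le_mul_of_nonneg_right hb hc.le)
    linarith
  · rcases le_or_gt 0 b₂ with h2' | h2'
    · rw [if_neg (not_le.mpr h1), if_pos h1, if_pos h2', if_neg (not_lt.mpr h2')]
      simp only [zero_div, add_zero, zero_add, mul_one_div]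
      have hL : b₁ * c / (ee + a + c) ≤ 0 :=
        div_nonpos_of_nonpos_of_nonneg (mul_nonpos_of_nonpos_of_nonneg h1.le hc.le) h2.le
      have hR : 0 ≤ b₂ * c / (ee - a + c) :=
        div_nonneg (mul_nonneg h2' hc.le) hpos.le
      linarith
    · rw [if_neg (not_le.mpr h1), if_pos h1, if_neg (not_le.mpr h2'), if_pos h2']
      simp only [zero_div, add_zero, zero_add, mul_one_div]
      have h := (div_le_div_iff_of_pos_right h2).mpr (mul_le_mul_of_nonneg_right hb hc.le)
      linarith

lemma omega_mono_a (a₁ a₂ b c ee : ℝ) (ha1 : 0 ≤ a₁) (ha : a₁ ≤ a₂) (hc : 0 < c)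
    (hpos : 0 < ee - a₂ + c) (hee : 0 ≤ ee) :
    OmegaFun a₁ b c ee ≤ OmegaFun a₂ b c ee := by
  have hp1 : 0 < ee - a₁ + c := by linarith
  have hq1 : 0 < ee + a₁ + c := by linarith
  have hq2 : 0 < ee + a₂ + c := by linarith
  unfold OmegaFun
  rcases le_or_gt 0 b with hb | hb
  · rw [if_pos hb, if_neg (not_lt.mpr hb)]
    simp only [zero_div, add_zero, mul_one_div]
    have h1 : a₁ / (ee - a₁ + c) ≤ a₂ / (ee - a₂ + c) := by
      rw [div_le_div_iff₀ hp1 hpos]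
      nlinarith [mul_nonneg (sub_nonneg.2 ha) hp1.le, mul_nonneg ha1 (sub_nonneg.2 ha)]
    have h2 : b * c / (ee - a₁ + c) ≤ b * c / (ee - a₂ + c) := by
      rw [div_le_div_iff₀ hp1 hpos]
      nlinarith [mul_nonneg (mul_nonneg hb hc.le) (sub_nonneg.2 ha)]
    linarith
  · rw [if_neg (not_le.mpr hb), if_pos hb]
    simp only [zero_div, add_zero, zero_add, mul_one_div]
    have h1 : a₁ / (ee - a₁ + c) ≤ a₂ / (ee - a₂ + c) := by
      rw [div_le_div_iff₀ hp1 hpos]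
      nlinarith [mul_nonneg (sub_nonneg.2 ha) hp1.le, mul_nonneg ha1 (sub_nonneg.2 ha)]
    have h2 : b * c / (ee + a₁ + c) ≤ b * c / (ee + a₂ + c) := by
      rw [div_le_div_iff₀ hq1 hq2]
      nlinarith [mul_nonneg (mul_nonneg (neg_nonneg.2 hb.le) hc.le) (sub_nonneg.2 ha)]
    linarith

lemma omega_zero_b (a c₁ c₂ ee : ℝ) (ha : 0 ≤ a) (hcc : c₁ ≤ c₂)
    (hpos : 0 < ee - a + c₁) : OmegaFun a 0 c₂ ee ≤ OmegaFun a 0 c₁ ee := by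
  have hp2 : 0 < ee - a + c₂ := by linarith
  unfold OmegaFun
  simp only [zero_mul, zero_div, add_zero]
  rw [div_le_div_iff₀ hp2 hpos]
  nlinarith [mul_nonneg ha (sub_nonneg.2 hcc)]

lemma omega_mono_e (a b c e₁ e₂ : ℝ) (ha : 0 ≤ a) (hb : 0 ≤ b) (hc : 0 ≤ c)
    (hee : e₁ ≤ e₂) (hpos : 0 < e₁ - a + c) :
    OmegaFun a b c e₂ ≤ OmegaFun a b c e₁ := by
  have hp2 : 0 < e₂ - a + c := by linarith
  unfold OmegaFun
  rw [if_pos hb, if_neg (not_lt.mpr hb)]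
  simp only [zero_div, add_zero, mul_one_div]
  have h1 : a / (e₂ - a + c) ≤ a / (e₁ - a + c) := by
    rw [div_le_div_iff₀ hp2 hpos]
    nlinarith [mul_nonneg ha (sub_nonneg.2 hee)]
  have h2 : b * c / (e₂ - a + c) ≤ b * c / (e₁ - a + c) := by
    rw [div_le_div_iff₀ hp2 hpos]
    nlinarith [mul_nonneg (mul_nonneg hb hc) (sub_nonneg.2 hee)]
  linarith

lemma omega_at_zero (b c ee : ℝ) : OmegaFun 0 b c ee = b * c / (ee + c) := by
  unfold OmegaFun
  rcases le_or_gt 0 b with hb | hb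
  · rw [if_pos hb, if_neg (not_lt.mpr hb)]
    simp only [sub_zero, add_zero, zero_div, zero_add, mul_one_div]
  · rw [if_neg (not_le.mpr hb), if_pos hb]
    simp only [sub_zero, add_zero, zero_div, zero_add, mul_one_div]

/-- Lemma `UpperBound.zetabar`.  Fix a treatment `d`, a model `o`,
a stage `t` and `0 ≤ γ < e_t(d)`.  If `|J̄_t(d)| ≤ γ` and `|f_t(d) − e_t(d)| ≤ γ` then
the posterior means deviate from `θ(d)` by at most `Ω`-type bounds; moreover `Ω` has
the stated monotonicity properties on its domain. -/
theorem statement8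
    {Ω : Type*} [MeasurableSpace Ω] (P : Measure Ω) [IsProbabilityMeasure P]
    (M L : ℕ) (Y : ℕ → Ω → ℝ) (D : ℕ → Ω → Fin (M + 1)) (d : Fin (M + 1))
    (ζ0 ν0 : Fin (L + 1) → ℝ) (hν0 : ∀ o', 0 < ν0 o')
    -- `θ(d) := E[Y(d)]`
    (θd : ℝ) (hθd : θd = ∫ ω, Y 1 ω ∂P)
    -- empirical frequency, mean-deviation average, and expected frequency
    (f : ℕ → Ω → ℝ)
    (hf : ∀ t ω, f t ω =
      (t : ℝ)⁻¹ * ∑ s ∈ Finset.Icc 1 t, if D s ω = d then (1 : ℝ) else 0)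
    (J : ℕ → Ω → ℝ)
    (hJ : ∀ t ω, J t ω =
      (t : ℝ)⁻¹ * ∑ s ∈ Finset.Icc 1 t, if D s ω = d then Y s ω - θd else 0)
    (e : ℕ → ℝ)
    (he : ∀ t, e t = (t : ℝ)⁻¹ * ∑ s ∈ Finset.Icc 1 t, (P {ω | D s ω = d}).toReal)
    -- posterior means of the models
    (ζt : Fin (L + 1) → ℕ → Ω → ℝ)
    (hζt : ∀ o' t ω, ζt o' t ω =
      ((∑ s ∈ Finset.Icc 1 t, if D s ω = d then Y s ω else 0) + ν0 o' * ζ0 o') /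
        ((∑ s ∈ Finset.Icc 1 t, if D s ω = d then (1 : ℝ) else 0) + ν0 o'))
    -- the fixed quantities of Statement 8
    (o : Fin (L + 1)) (t : ℕ) (γ : ℝ) (hγ0 : 0 ≤ γ) (hγe : γ < e t)
    (ω : Ω) (hJb : |J t ω| ≤ γ) (hfb : |f t ω - e t| ≤ γ) :
    -- (1)–(3): the bounds on the posterior mean
    (|ζt o t ω - θd| ≤ OmegaFun γ |ζ0 o - θd| (ν0 o / t) (e t)) ∧
    (ζt o t ω - θd ≤ OmegaFun γ (ζ0 o - θd) (ν0 o / t) (e t)) ∧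
    (-(ζt o t ω - θd) ≤ OmegaFun γ (-(ζ0 o - θd)) (ν0 o / t) (e t)) ∧
    -- monotonicity properties of `Ω` on its domain
    (∀ a₁ a₂ b c ee : ℝ, 0 ≤ a₁ → a₁ ≤ a₂ → 0 < c → 0 < ee - a₂ + c → 0 ≤ ee →
      OmegaFun a₁ b c ee ≤ OmegaFun a₂ b c ee) ∧
    (∀ a b₁ b₂ c ee : ℝ, b₁ ≤ b₂ → 0 ≤ a → 0 < c → 0 < ee - a + c →
      OmegaFun a b₁ c ee ≤ OmegaFun a b₂ c ee) ∧
    (∀ a c₁ c₂ ee : ℝ, 0 ≤ a → c₁ ≤ c₂ → 0 < ee - a + c₁ →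
      OmegaFun a 0 c₂ ee ≤ OmegaFun a 0 c₁ ee) ∧
    (∀ a b c e₁ e₂ : ℝ, 0 ≤ a → 0 ≤ b → 0 ≤ c → e₁ ≤ e₂ → 0 < e₁ - a + c →
      OmegaFun a b c e₂ ≤ OmegaFun a b c e₁) ∧
    (∀ b c ee : ℝ, OmegaFun 0 b c ee = b * c / (ee + c)) := by
  obtain ⟨hJ1, hJ2⟩ := abs_le.mp hJb
  obtain ⟨hf1, hf2⟩ := abs_le.mp hfb
  have het : 0 < e t := lt_of_le_of_lt hγ0 hγe
  have ht0 : t ≠ 0 := by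
    intro h
    subst h
    rw [he 0] at het
    simp at het
  have htR : (0:ℝ) < t := Nat.cast_pos.mpr (Nat.pos_of_ne_zero ht0)
  set b := ζ0 o - θd with hbdef
  set c := ν0 o / (t:ℝ) with hcdef
  have hc : 0 < c := div_pos (hν0 o) htR
  set N := (∑ s ∈ Finset.Icc 1 t, if D s ω = d then (1:ℝ) else 0) with hNdef
  set S := (∑ s ∈ Finset.Icc 1 t, if D s ω = d then Y s ω else 0) with hSdef
  have hN0 : 0 ≤ N := Finset.sum_nonneg (fun s _ => by positivity)
  have hNν : 0 < N + ν0 o := by linarith [hν0 o]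
  have hfN : f t ω = N / t := by rw [hf]; rw [inv_mul_eq_div]
  have hsum : (∑ s ∈ Finset.Icc 1 t, if D s ω = d then Y s ω - θd else 0)
      = S - θd * N := by
    rw [hSdef, hNdef, Finset.mul_sum, ← Finset.sum_sub_distrib]
    exact Finset.sum_congr rfl (fun s _ => by split_ifs <;> ring)
  have hJS : (t:ℝ) * J t ω = S - θd * N := by
    rw [hJ, ← mul_assoc, mul_inv_cancel₀ htR.ne', one_mul, hsum]
  have hkey : ζt o t ω - θd = (J t ω + c * b) / (f t ω + c) := by
    rw [hζt, hfN, hbdef, hcdef]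
    rw [div_sub' hNν.ne']
    have hden : N / (t:ℝ) + ν0 o / (t:ℝ) = (N + ν0 o) / t := by ring
    rw [hden, div_div_eq_mul_div]
    rw [← hSdef]
    congr 1
    field_simp
    linear_combination -hJS
  have hfv1 : e t - γ ≤ f t ω := by linarith
  have hfv2 : f t ω ≤ e t + γ := by linarith
  have hpos : 0 < e t - γ + c := by linarith
  have h2 : ζt o t ω - θd ≤ OmegaFun γ b c (e t) := by
    rw [hkey]
    exact omega_key γ (J t ω) b c (e t) (f t ω) hγ0 hJ2 hc hfv1 hfv2 hpos
  have h3 : -(ζt o t ω - θd) ≤ OmegaFun γ (-b) c (e t) := by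
    rw [hkey]
    have hr : -((J t ω + c * b) / (f t ω + c)) = (-J t ω + c * (-b)) / (f t ω + c) := by
      ring
    rw [hr]
    exact omega_key γ (-(J t ω)) (-b) c (e t) (f t ω) hγ0 (by linarith) hc hfv1 hfv2 hpos
  refine ⟨?_, h2, h3, fun a₁ a₂ b c ee h1 h2 h3 h4 h5 => omega_mono_a a₁ a₂ b c ee h1 h2 h3 h4 h5,
    fun a b₁ b₂ c ee h1 h2 h3 h4 => omega_mono_b a b₁ b₂ c ee h1 h2 h3 h4,
    fun a c₁ c₂ ee h1 h2 h3 => omega_zero_b a c₁ c₂ ee h1 h2 h3,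
    fun a b c e₁ e₂ h1 h2 h3 h4 h5 => omega_mono_e a b c e₁ e₂ h1 h2 h3 h4 h5,
    fun b c ee => omega_at_zero b c ee⟩
  have m1 : OmegaFun γ b c (e t) ≤ OmegaFun γ |b| c (e t) :=
    omega_mono_b γ b |b| c (e t) (le_abs_self b) hγ0 hc (by linarith)
  have m2 : OmegaFun γ (-b) c (e t) ≤ OmegaFun γ |b| c (e t) :=
    omega_mono_b γ (-b) |b| c (e t) (neg_le_abs b) hγ0 hc (by linarith)
  exact abs_le.mpr ⟨by linarith, by linarith⟩
end

section
/- Fix a treatment d and suppose the density f_d of F_d is continuous and strictly positive on ℝ. Let C_ζ(d) ⊆ ℝ be bounded with nonempty interior and let C be the set of states z = (ζ, ν) ∈ ℤ with ζ(d) ∈ C_ζ(d). Then there exists δ_C > 0 such that for every z ∈ C and every Borel set E ⊆ ℝ: Q( ζ′(d) ∈ E | D = d, z ) ≥ δ_C · Leb( E ∩ C_ζ(d) ), where ζ′(d) = Y/(1+ν(d)) + ν(d)ζ(d)/(1+ν(d)) with Y ~ F_d, and Leb denotes Lebesgue measure. -/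
open MeasureTheory

/-- Lemma `Q.lower.bound.1`.  Fix a treatment `d` and suppose the
density `f_d` of `F_d` is continuous and strictly positive on `ℝ`.  Let
`C_ζ(d) ⊆ ℝ` be bounded with nonempty interior.  Then there exists `δ_C > 0` such
that for every state `z = (ζ, ν)` of the chain with `ζ(d) ∈ C_ζ(d)` and every Borel
set `E ⊆ ℝ`,
`Q(ζ′(d) ∈ E | D = d, z) ≥ δ_C · Leb(E ∩ C_ζ(d))`,
where `ζ′(d) = Y/(1+ν(d)) + ν(d)ζ(d)/(1+ν(d))` with `Y ~ F_d`. -/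
theorem statement15
    (M T : ℕ) (ν0 : Fin (M + 1) → ℕ) (ε : ℝ) (hε : 0 < ε ∧ ε < 1 / (M + 1))
    (d : Fin (M + 1))
    -- the outcome distribution of treatment `d`, with continuous positive density
    (F : Measure ℝ) [IsProbabilityMeasure F]
    (fd : ℝ → ℝ) (hfd : Continuous fd) (hfdpos : ∀ y, 0 < fd y)
    (hF : F = MeasureTheory.volume.withDensity fun y => ENNReal.ofReal (fd y))
    -- the bounded set with nonempty interior
    (Cζ : Set ℝ) (hCb : Bornology.IsBounded Cζ) (hCi : (interior Cζ).Nonempty) :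
    ∃ δC : ℝ, 0 < δC ∧
      ∀ ζ : Fin (M + 1) → ℝ, ∀ ν : Fin (M + 1) → ℕ,
        ζ d ∈ Cζ → (∀ dd, ν0 dd ≤ ν dd) → (∑ dd, (ν dd - ν0 dd)) ≤ T →
        ∀ E : Set ℝ, MeasurableSet E →
          ENNReal.ofReal δC * MeasureTheory.volume (E ∩ Cζ) ≤
            Measure.map
              (fun y => y / ((ν d : ℝ) + 1) + (ν d : ℝ) * ζ d / ((ν d : ℝ) + 1)) F
              E := by
  -- bound the set Cζ
  obtain ⟨r, hr⟩ := hCb.subset_closedBall 0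
  set R : ℝ := max r 0 with hRdef
  have hR0 : 0 ≤ R := le_max_right _ _
  have hCR : ∀ x ∈ Cζ, |x| ≤ R := by
    intro x hx
    have := hr hx
    simp only [Metric.mem_closedBall, Real.dist_eq, sub_zero] at this
    exact this.trans (le_max_left _ _)
  -- bound on ν d
  set N : ℝ := (ν0 d : ℝ) + T + 1 with hNdef
  have hN1 : 1 ≤ N := by
    have h1 : (0:ℝ) ≤ (ν0 d : ℝ) := Nat.cast_nonneg _
    have h2 : (0:ℝ) ≤ (T : ℝ) := Nat.cast_nonneg _
    rw [hNdef]; linarith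
  set K : ℝ := 2 * N * R with hKdef
  have hK0 : 0 ≤ K := by positivity
  -- minimum of fd on [-K, K]
  obtain ⟨y0, hy0mem, hy0min⟩ :=
    isCompact_Icc.exists_isMinOn (Set.nonempty_Icc.2 (by linarith : -K ≤ K))
      (hfd.continuousOn (s := Set.Icc (-K) K))
  refine ⟨fd y0, hfdpos y0, ?_⟩
  intro ζ ν hζC hν0 hsum E hE
  -- bound ν d
  have hνd : (ν d : ℝ) + 1 ≤ N := by
    have h1 : ν d - ν0 d ≤ T := le_trans (Finset.single_le_sum
      (f := fun dd => ν dd - ν0 dd) (fun _ _ => Nat.zero_le _) (Finset.mem_univ d)) hsum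
    have h2 : ν d ≤ ν0 d + T := by omega
    have := (Nat.cast_le (α := ℝ)).2 h2
    push_cast at this
    rw [hNdef]; linarith
  set n : ℝ := (ν d : ℝ) with hn
  have hn0 : 0 ≤ n := Nat.cast_nonneg _
  have ha1 : (1 : ℝ) ≤ n + 1 := by linarith
  have ha0 : (n + 1 : ℝ) ≠ 0 := by positivity
  set g : ℝ → ℝ := fun y => y / (n + 1) + n * ζ d / (n + 1) with hg
  have hgm : Measurable g := by
    exact (measurable_id.div_const _).add_const _
  -- pointwise lower bound on fd over the relevant preimage
  set S : Set ℝ := g ⁻¹' (E ∩ Cζ) with hS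
  have hfd_lb : ∀ y ∈ S, fd y0 ≤ fd y := by
    intro y hy
    have hgy : g y ∈ Cζ := hy.2
    have hgyR : |g y| ≤ R := hCR _ hgy
    have hζR : |ζ d| ≤ R := hCR _ hζC
    have hyval : y = (n + 1) * g y - n * ζ d := by
      rw [hg]; field_simp; ring
    have hyK : |y| ≤ K := by
      rw [hyval]
      calc |(n + 1) * g y - n * ζ d| ≤ |(n + 1) * g y| + |n * ζ d| := abs_sub _ _
        _ = (n + 1) * |g y| + n * |ζ d| := by
            rw [abs_mul, abs_mul, abs_of_nonneg (by linarith : (0:ℝ) ≤ n + 1),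
              abs_of_nonneg hn0]
        _ ≤ N * R + N * R := by
            gcongr <;> linarith
        _ = K := by rw [hKdef]; ring
    exact hy0min ⟨by cases abs_le.1 hyK; linarith, (abs_le.1 hyK).2⟩
  -- now compute
  rw [Measure.map_apply hgm hE, hF, withDensity_apply _ (hgm hE)]
  have hSsub : S ⊆ g ⁻¹' E := fun y hy => hy.1
  have step1 : ∫⁻ y in S, ENNReal.ofReal (fd y) ≤ ∫⁻ y in g ⁻¹' E, ENNReal.ofReal (fd y) :=
    lintegral_mono_set hSsub
  have step2 : ENNReal.ofReal (fd y0) * volume S ≤ ∫⁻ y in S, ENNReal.ofReal (fd y) := by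
    rw [← setLIntegral_const S (ENNReal.ofReal (fd y0))]
    refine setLIntegral_mono (hfd.measurable.ennreal_ofReal) (fun y hy => ?_)
    exact ENNReal.ofReal_le_ofReal (hfd_lb y hy)
  have hvolS : volume (E ∩ Cζ) ≤ volume S := by
    have : S = (fun y => y * (n + 1)⁻¹) ⁻¹'
        ((fun x => x + n * ζ d / (n + 1)) ⁻¹' (E ∩ Cζ)) := by
      ext y; simp [hS, hg, div_eq_mul_inv]
    rw [this, Real.volume_preimage_mul_right (inv_ne_zero ha0),
      measure_preimage_add_right]
    rw [inv_inv, abs_of_nonneg (by linarith : (0:ℝ) ≤ n + 1)]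
    calc volume (E ∩ Cζ) = 1 * volume (E ∩ Cζ) := (one_mul _).symm
      _ ≤ ENNReal.ofReal (n + 1) * volume (E ∩ Cζ) := by
          gcongr
          rw [← ENNReal.ofReal_one]
          exact ENNReal.ofReal_le_ofReal ha1
  calc ENNReal.ofReal (fd y0) * volume (E ∩ Cζ)
      ≤ ENNReal.ofReal (fd y0) * volume S := by gcongr
    _ ≤ ∫⁻ y in S, ENNReal.ofReal (fd y) := step2
    _ ≤ ∫⁻ y in g ⁻¹' E, ENNReal.ofReal (fd y) := step1
end

section
/- Assume E|Y(d) − θ(d)| ≤ σ(d) for each d, where θ(d) and σ(d)² are the mean and variance of F_d. For a, A ≥ 0 define V(z) := 1 + a·Σ_{d=0}^M |ζ(d) − θ(d)|/σ(d) + A·( T − Σ_{d=0}^M (ν(d) − ν_0(d)) ). Then for every state z ∈ ℤ: (QV)(z) ≤ max{ γ(z), (T−1)/T }·V(z) + 1 − γ(z) + a·Σ_{d=0}^M δ(z)(d)/(1 + ν_0(d)), where γ(z) := ε·max_d ν(d)/(ν(d)+1) + (1−ε). Moreover γ(z) ≤ γ̄ := ε·max_d (ν_0(d)+T)/(ν_0(d)+T+1)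 + 1 − ε < 1 for every z. -/
open MeasureTheory

noncomputable section

/-- One-step state update of the Markov Gaussian bandit chain. -/
noncomputable def nextState (M T : ℕ) (ν0 : Fin (M + 1) → ℕ)
    (z : (Fin (M + 1) → ℝ) × (Fin (M + 1) → ℕ)) (l : Fin (M + 1)) (y : ℝ) :
    (Fin (M + 1) → ℝ) × (Fin (M + 1) → ℕ) :=
  (Function.update z.1 l
      (y / ((z.2 l : ℝ) + 1) + z.1 l * (z.2 l : ℝ) / ((z.2 l : ℝ) + 1)),
    Function.update z.2 l
      (z.2 l + if (∑ dd, (z.2 dd - ν0 dd)) < T then 1 else 0))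

private lemma div_succ_mono {x y : ℝ} (hx : 0 ≤ x) (hxy : x ≤ y) :
    x / (x + 1) ≤ y / (y + 1) := by
  rw [div_le_div_iff₀ (by linarith) (by linarith)]
  nlinarith

set_option maxHeartbeats 1000000 in
/-- Lemma `Q.drift`.  Assuming `E|Y(d) − θ(d)| ≤ σ(d)` for each
treatment, the Lyapunov function
`V(z) := 1 + a·Σ_d |ζ(d) − θ(d)|/σ(d) + A·(T − Σ_d (ν(d) − ν₀(d)))`
satisfies the drift inequality
`(QV)(z) ≤ max{γ(z), (T−1)/T}·V(z) + 1 − γ(z) + a·Σ_d δ(z)(d)/(1+ν₀(d))`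
with `γ(z) := ε·max_d ν(d)/(ν(d)+1) + (1−ε)`; moreover `γ(z) ≤ γ̄ < 1` for every
state `z`, where `γ̄ := ε·max_d (ν₀(d)+T)/(ν₀(d)+T+1) + 1 − ε`. -/
theorem statement17
    (M T : ℕ) (hT : 1 ≤ T) (ν0 : Fin (M + 1) → ℕ) (ε : ℝ)
    (hε : 0 < ε ∧ ε < 1 / (M + 1))
    -- the outcome distributions with means `θ(d)` and variances `σ(d)²`
    (F : Fin (M + 1) → Measure ℝ) (hF : ∀ l, IsProbabilityMeasure (F l))
    (θ σ : Fin (M + 1) → ℝ) (hσpos : ∀ l, 0 < σ l)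
    (hθ : ∀ l, θ l = ∫ y, y ∂(F l))
    (hσ : ∀ l, (σ l) ^ 2 = ∫ y, (y - θ l) ^ 2 ∂(F l))
    -- the first-absolute-moment bound `E|Y(d) − θ(d)| ≤ σ(d)`
    (habs : ∀ l, ∫ y, |y - θ l| ∂(F l) ≤ σ l)
    -- the Markov policy, bounded below by ε
    (pol : (Fin (M + 1) → ℝ) × (Fin (M + 1) → ℕ) → Fin (M + 1) → ℝ)
    (hpolε : ∀ z l, ε ≤ pol z l) (hpol1 : ∀ z, ∑ l, pol z l = 1)
    -- the one-step transition kernel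
    (step : (Fin (M + 1) → ℝ) × (Fin (M + 1) → ℕ) →
      Measure ((Fin (M + 1) → ℝ) × (Fin (M + 1) → ℕ)))
    (hstep : ∀ z, step z = ∑ l : Fin (M + 1),
      ENNReal.ofReal (pol z l) • Measure.map (nextState M T ν0 z l) (F l))
    -- the Lyapunov function `V`
    (a A : ℝ) (ha : 0 ≤ a) (hA : 0 ≤ A)
    (V : (Fin (M + 1) → ℝ) × (Fin (M + 1) → ℕ) → ℝ)
    (hV : ∀ z, V z = 1 + a * ∑ dd, |z.1 dd - θ dd| / σ dd +
      A * ((T : ℝ) - ∑ dd, ((z.2 dd : ℝ) - (ν0 dd : ℝ))))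
    -- the contraction factors
    (γfun : (Fin (M + 1) → ℝ) × (Fin (M + 1) → ℕ) → ℝ)
    (hγ : ∀ z, γfun z =
      ε * (⨆ dd : Fin (M + 1), (z.2 dd : ℝ) / ((z.2 dd : ℝ) + 1)) + (1 - ε))
    (γbar : ℝ)
    (hγbar : γbar =
      ε * (⨆ dd : Fin (M + 1), ((ν0 dd : ℝ) + T) / ((ν0 dd : ℝ) + T + 1)) + 1 - ε)
    -- a state of the chain
    (z : (Fin (M + 1) → ℝ) × (Fin (M + 1) → ℕ))
    (hz : (∀ dd, ν0 dd ≤ z.2 dd) ∧ (∑ dd, (z.2 dd - ν0 dd)) ≤ T) :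
    (∫ z', V z' ∂(step z)) ≤
      max (γfun z) (((T : ℝ) - 1) / T) * V z + 1 - γfun z +
        a * ∑ dd, pol z dd / (1 + (ν0 dd : ℝ)) ∧
    γfun z ≤ γbar ∧ γbar < 1 := by
  obtain ⟨hε0, hεM⟩ := hε
  obtain ⟨hz1, hz2⟩ := hz
  have hT0 : (0:ℝ) < T := by exact_mod_cast hT
  have hM0 : (0:ℝ) ≤ (M:ℝ) := Nat.cast_nonneg M
  have hε1 : ε < 1 := by
    refine lt_of_lt_of_le hεM ?_
    rw [div_le_one (by positivity)]
    push_cast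
    linarith
  -- basic quantities
  set W : ℝ := ∑ dd, |z.1 dd - θ dd| / σ dd with hWdef
  set Sr : ℝ := ∑ dd, ((z.2 dd : ℝ) - (ν0 dd : ℝ)) with hSrdef
  set Sn : ℕ := ∑ dd, (z.2 dd - ν0 dd) with hSndef
  have hSr : Sr = (Sn : ℝ) := by
    rw [hSrdef, hSndef, Nat.cast_sum]
    exact Finset.sum_congr rfl fun dd _ => by rw [Nat.cast_sub (hz1 dd)]
  have hSnT : Sn ≤ T := hz2
  have hSr0 : (0:ℝ) ≤ Sr := by rw [hSr]; positivity
  have hSrT : Sr ≤ (T:ℝ) := by rw [hSr]; exact_mod_cast hSnT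
  have hW0 : (0:ℝ) ≤ W := Finset.sum_nonneg fun dd _ => by
    have := hσpos dd; positivity
  have hVz : V z = 1 + a * W + A * ((T:ℝ) - Sr) := by rw [hV z]
  -- the policy at z
  have hpε : ∀ l, ε ≤ pol z l := hpolε z
  have hp0 : ∀ l, 0 ≤ pol z l := fun l => le_trans hε0.le (hpε l)
  -- γ at z
  set s : ℝ := ⨆ dd : Fin (M+1), (z.2 dd : ℝ) / ((z.2 dd : ℝ) + 1) with hsdef
  have hγz : γfun z = ε * s + (1 - ε) := by rw [hγ z]
  have hbdd : BddAbove (Set.range fun dd : Fin (M+1) =>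
      (z.2 dd : ℝ) / ((z.2 dd : ℝ) + 1)) := Set.Finite.bddAbove (Set.finite_range _)
  have hs0 : 0 ≤ s := le_ciSup_of_le hbdd 0 (by positivity)
  have hs1 : s ≤ 1 := ciSup_le fun dd => by
    rw [div_le_one (by positivity)]
    linarith [Nat.cast_nonneg (α := ℝ) (z.2 dd)]
  have hsl : ∀ l : Fin (M+1), (z.2 l : ℝ) / ((z.2 l : ℝ) + 1) ≤ s :=
    fun l => le_ciSup hbdd l
  have hγ0 : 0 ≤ γfun z := by rw [hγz]; nlinarith
  have hγle1 : γfun z ≤ 1 := by rw [hγz]; nlinarith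
  set m : ℝ := max (γfun z) (((T:ℝ) - 1) / T) with hmdef
  have hγm : γfun z ≤ m := le_max_left _ _
  have hTm : ((T:ℝ) - 1) / T ≤ m := le_max_right _ _
  have hm0 : 0 ≤ m := le_trans hγ0 hγm
  -- second bullet : γfun z ≤ γbar
  have hbdd2 : BddAbove (Set.range fun dd : Fin (M+1) =>
      ((ν0 dd : ℝ) + T) / ((ν0 dd : ℝ) + T + 1)) := Set.Finite.bddAbove (Set.finite_range _)
  have hssbar : s ≤ ⨆ dd : Fin (M+1), ((ν0 dd : ℝ) + T) / ((ν0 dd : ℝ) + T + 1) := by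
    apply ciSup_le
    intro dd
    have h1 : z.2 dd ≤ ν0 dd + T := by
      have h2 := Finset.single_le_sum (f := fun dd => z.2 dd - ν0 dd)
        (fun i _ => Nat.zero_le _) (Finset.mem_univ dd)
      have h3 : z.2 dd - ν0 dd ≤ T := le_trans h2 hSnT
      have h4 := hz1 dd
      omega
    refine le_trans (div_succ_mono (Nat.cast_nonneg _) ?_) (le_ciSup hbdd2 dd)
    exact_mod_cast h1
  have bullet2 : γfun z ≤ γbar := by
    rw [hγz, hγbar]
    have := mul_le_mul_of_nonneg_left hssbar hε0.le
    linarith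
  have bullet3 : γbar < 1 := by
    obtain ⟨i, hi⟩ := exists_eq_ciSup_of_finite
      (f := fun dd : Fin (M+1) => ((ν0 dd : ℝ) + T) / ((ν0 dd : ℝ) + T + 1))
    rw [hγbar, ← hi]
    have h1 : ((ν0 i : ℝ) + T) / ((ν0 i : ℝ) + T + 1) < 1 := by
      rw [div_lt_one (by positivity)]
      linarith
    nlinarith
  -- useful positivity for the last sum
  have hPsum0 : 0 ≤ a * ∑ dd, pol z dd / (1 + (ν0 dd : ℝ)) := by
    refine mul_nonneg ha (Finset.sum_nonneg fun dd _ => div_nonneg (hp0 dd) (by positivity))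
  have hVz1 : 1 ≤ V z := by
    rw [hVz]
    nlinarith [mul_nonneg ha hW0, mul_nonneg hA (by linarith : (0:ℝ) ≤ (T:ℝ) - Sr)]
  -- the counter increment
  set c : ℕ := if Sn < T then 1 else 0 with hcdef
  have hφeq : ∀ l, nextState M T ν0 z l = fun y : ℝ =>
      ((Function.update z.1 l
          (y / ((z.2 l : ℝ) + 1) + z.1 l * (z.2 l : ℝ) / ((z.2 l : ℝ) + 1)),
        Function.update z.2 l (z.2 l + c))) := by
    intro l
    funext y
    simp only [nextState, hcdef, hSndef]
  -- measurability
  have hVmeas : Measurable V := by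
    have hVfun : V = fun w => 1 + a * ∑ dd, |w.1 dd - θ dd| / σ dd +
        A * ((T : ℝ) - ∑ dd, ((w.2 dd : ℝ) - (ν0 dd : ℝ))) := funext hV
    rw [hVfun]
    apply Measurable.add
    · apply Measurable.add measurable_const
      apply Measurable.const_mul
      apply Finset.measurable_sum
      intro dd _
      exact (((measurable_pi_apply dd).comp measurable_fst).sub measurable_const).abs.div_const _
    · apply Measurable.const_mul
      apply Measurable.const_sub
      apply Finset.measurable_sum
      intro dd _
      refine Measurable.sub ?_ measurable_const
      exact measurable_from_top.comp ((measurable_pi_apply dd).comp measurable_snd)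
  have hφmeas : ∀ l, Measurable (nextState M T ν0 z l) := by
    intro l
    rw [hφeq l]
    refine Measurable.prodMk ?_ measurable_const
    exact (measurable_update _).comp ((measurable_id.div_const _).add_const _)
  -- split the sums at a coordinate
  have hsum1 : ∀ (l : Fin (M+1)) (v : ℝ),
      ∑ dd, |Function.update z.1 l v dd - θ dd| / σ dd
        = |v - θ l| / σ l + ∑ dd ∈ Finset.univ.erase l, |z.1 dd - θ dd| / σ dd := by
    intro l v
    rw [← Finset.add_sum_erase Finset.univ
      (fun dd => |Function.update z.1 l v dd - θ dd| / σ dd) (Finset.mem_univ l),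
      Function.update_self]
    congr 1
    exact Finset.sum_congr rfl fun dd hdd => by
      rw [Function.update_of_ne (Finset.ne_of_mem_erase hdd)]
  have hWsplit : ∀ l : Fin (M+1),
      ∑ dd ∈ Finset.univ.erase l, |z.1 dd - θ dd| / σ dd = W - |z.1 l - θ l| / σ l := by
    intro l
    have := Finset.add_sum_erase Finset.univ
      (fun dd => |z.1 dd - θ dd| / σ dd) (Finset.mem_univ l)
    rw [hWdef]
    linarith
  have hνsum : ∀ l : Fin (M+1),
      ∑ dd, ((Function.update z.2 l (z.2 l + c) dd : ℝ) - (ν0 dd : ℝ)) = Sr + c := by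
    intro l
    rw [← Finset.add_sum_erase Finset.univ
      (fun dd => ((Function.update z.2 l (z.2 l + c) dd : ℝ) - (ν0 dd : ℝ)))
      (Finset.mem_univ l), Function.update_self]
    have h1 : ∑ dd ∈ Finset.univ.erase l,
        ((Function.update z.2 l (z.2 l + c) dd : ℝ) - (ν0 dd : ℝ))
        = ∑ dd ∈ Finset.univ.erase l, ((z.2 dd : ℝ) - (ν0 dd : ℝ)) :=
      Finset.sum_congr rfl fun dd hdd => by
        rw [Function.update_of_ne (Finset.ne_of_mem_erase hdd)]
    rw [h1]
    have h2 := Finset.add_sum_erase Finset.univ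
      (fun dd => ((z.2 dd : ℝ) - (ν0 dd : ℝ))) (Finset.mem_univ l)
    rw [hSrdef, ← h2]
    push_cast
    ring
  -- main case split on integrability
  by_cases hInt : Integrable V (step z)
  · -- the integrable case : do the real computation
    have hsne : ∀ l : Fin (M+1), (ENNReal.ofReal (pol z l)) ≠ 0 :=
      fun l => (ENNReal.ofReal_pos.mpr (lt_of_lt_of_le hε0 (hpε l))).ne'
    have hcomp : ∀ l, Integrable V (Measure.map (nextState M T ν0 z l) (F l)) := by
      intro l
      have hle : (ENNReal.ofReal (pol z l)) •
          Measure.map (nextState M T ν0 z l) (F l) ≤ step z := by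
        rw [hstep z]
        refine Measure.le_iff'.mpr fun u => ?_
        rw [Measure.finset_sum_apply]
        exact Finset.single_le_sum
          (f := fun l => (ENNReal.ofReal (pol z l) •
            Measure.map (nextState M T ν0 z l) (F l)) u)
          (fun i _ => zero_le) (Finset.mem_univ l)
      have h2 := hInt.mono_measure hle
      rwa [integrable_smul_measure (hsne l) ENNReal.ofReal_ne_top] at h2
    have hg_int : ∀ l, Integrable (fun y => V (nextState M T ν0 z l y)) (F l) := by
      intro l
      have := (integrable_map_measure hVmeas.aestronglyMeasurable
        (hφmeas l).aemeasurable).mp (hcomp l)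
      exact this
    have hsplit : ∫ z', V z' ∂(step z)
        = ∑ l, pol z l * ∫ y, V (nextState M T ν0 z l y) ∂(F l) := by
      rw [hstep z, integral_finset_sum_measure (fun l _ =>
        (integrable_smul_measure (hsne l) ENNReal.ofReal_ne_top).mpr (hcomp l))]
      refine Finset.sum_congr rfl fun l _ => ?_
      rw [integral_smul_measure,
        integral_map (hφmeas l).aemeasurable hVmeas.aestronglyMeasurable,
        ENNReal.toReal_ofReal (hp0 l), smul_eq_mul]
    -- the per-arm bound
    have key : ∀ l : Fin (M+1), ∫ y, V (nextState M T ν0 z l y) ∂(F l)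
        ≤ 1 + a * W - a * (|z.1 l - θ l| / σ l) / ((z.2 l : ℝ) + 1)
          + a / ((z.2 l : ℝ) + 1) + A * ((T:ℝ) - Sr - c) := by
      intro l
      haveI := hF l
      set n : ℝ := (z.2 l : ℝ) with hndef
      have hn0 : (0:ℝ) ≤ n := Nat.cast_nonneg _
      have hn1 : (0:ℝ) < n + 1 := by linarith
      have hσl := hσpos l
      set β : ℝ := θ l * (n + 1) - z.1 l * n with hβdef
      set b : ℝ := a / (σ l * (n + 1)) with hbdef
      set K : ℝ := 1 + a * (W - |z.1 l - θ l| / σ l) + A * ((T:ℝ) - Sr - c) with hKdef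
      have hgf : ∀ y, V (nextState M T ν0 z l y) = b * |y - β| + K := by
        intro y
        rw [hφeq l]
        rw [hV _]
        dsimp only
        rw [hsum1 l, hWsplit l, hνsum l]
        have hu : y / (n + 1) + z.1 l * n / (n + 1) - θ l = (y - β) / (n + 1) := by
          rw [hβdef]; field_simp; ring
        rw [hu, abs_div, abs_of_pos hn1, hbdef, hKdef]
        field_simp
        ring
      by_cases ha0 : a = 0
      · have hb0 : b = 0 := by rw [hbdef, ha0]; simp
        have hIK : ∫ y, V (nextState M T ν0 z l y) ∂(F l) = K := by
          simp only [hgf, hb0, zero_mul, zero_add]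
          simp [integral_const]
        rw [hIK, hKdef, ha0]
        simp
      · have haa : 0 < a := lt_of_le_of_ne ha (Ne.symm ha0)
        have hb : 0 < b := by rw [hbdef]; exact div_pos haa (mul_pos hσl hn1)
        have hint1 : Integrable (fun y => b * |y - β| + K) (F l) := by
          have := hg_int l
          simp only [hgf] at this
          exact this
        have hint2 : Integrable (fun y => |y - β|) (F l) := by
          have h4 := (hint1.sub (integrable_const K)).const_mul b⁻¹
          refine h4.congr (Filter.Eventually.of_forall fun y => ?_)
          field_simp
          simp
        have hint3 : Integrable (fun y => |y - θ l|) (F l) := by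
          refine (hint2.add (integrable_const |β - θ l|)).mono'
            ((measurable_id.sub_const _).abs).aestronglyMeasurable
            (Filter.Eventually.of_forall fun y => ?_)
          rw [Real.norm_eq_abs, abs_abs]
          calc |y - θ l| = |(y - β) + (β - θ l)| := by ring_nf
            _ ≤ |y - β| + |β - θ l| := abs_add_le _ _
        have habs2 : ∫ y, |y - β| ∂(F l) ≤ σ l + |z.1 l - θ l| * n := by
          have h5 : ∫ y, |y - β| ∂(F l) ≤ ∫ y, (|y - θ l| + |θ l - β|) ∂(F l) := by
            refine integral_mono hint2 (hint3.add (integrable_const _)) fun y => ?_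
            calc |y - β| = |(y - θ l) + (θ l - β)| := by ring_nf
              _ ≤ |y - θ l| + |θ l - β| := abs_add_le _ _
          have h6 : ∫ y, (|y - θ l| + |θ l - β|) ∂(F l)
              = (∫ y, |y - θ l| ∂(F l)) + |θ l - β| := by
            rw [integral_add hint3 (integrable_const _)]
            simp [integral_const]
          have h7 : |θ l - β| = |z.1 l - θ l| * n := by
            rw [hβdef, show θ l - (θ l * (n + 1) - z.1 l * n) = (z.1 l - θ l) * n by ring,
              abs_mul, abs_of_nonneg hn0]
          have h8 := habs l
          rw [h6, h7] at h5
          linarith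
        have h9 : ∫ y, V (nextState M T ν0 z l y) ∂(F l)
            = b * (∫ y, |y - β| ∂(F l)) + K := by
          simp only [hgf]
          rw [integral_add (hint2.const_mul b) (integrable_const K),
            integral_const_mul]
          simp [integral_const]
        rw [h9, hKdef]
        have h10 : b * (σ l + |z.1 l - θ l| * n)
            = a / (n + 1) + a * (|z.1 l - θ l| / σ l) * (n / (n + 1)) := by
          rw [hbdef]; field_simp
        have h11 := mul_le_mul_of_nonneg_left habs2 hb.le
        have hwid : a * (|z.1 l - θ l| / σ l) * (n / (n + 1))
            = a * (|z.1 l - θ l| / σ l) - a * (|z.1 l - θ l| / σ l) / (n + 1) := by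
          field_simp
          ring
        have hexp : a * (W - |z.1 l - θ l| / σ l)
            = a * W - a * (|z.1 l - θ l| / σ l) := by ring
        linarith
    -- per-arm bound refined with the policy weight
    have key2 : ∀ l : Fin (M+1),
        pol z l * ∫ y, V (nextState M T ν0 z l y) ∂(F l)
          ≤ pol z l * (1 + a * W + A * ((T:ℝ) - Sr - c))
            - a * (ε * (1 - s)) * (|z.1 l - θ l| / σ l)
            + a * (pol z l / (1 + (ν0 l : ℝ))) := by
      intro l
      have hn0 : (0:ℝ) ≤ (z.2 l : ℝ) := Nat.cast_nonneg _
      have hn1 : (0:ℝ) < (z.2 l : ℝ) + 1 := by linarith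
      have hw0 : 0 ≤ |z.1 l - θ l| / σ l := div_nonneg (abs_nonneg _) (hσpos l).le
      have i1 : 1 - s ≤ 1 / ((z.2 l : ℝ) + 1) := by
        have := hsl l
        have h0 : 1 - (z.2 l : ℝ) / ((z.2 l : ℝ) + 1) = 1 / ((z.2 l : ℝ) + 1) := by
          field_simp
          ring
        linarith
      have i2 : ε * (1 - s) ≤ pol z l * (1 / ((z.2 l : ℝ) + 1)) :=
        mul_le_mul (hpε l) i1 (by linarith) (hp0 l)
      have i3 := mul_le_mul_of_nonneg_right i2 hw0
      have i4 := mul_le_mul_of_nonneg_left i3 ha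
      have i5 : a * (pol z l * (1 / ((z.2 l : ℝ) + 1)) * (|z.1 l - θ l| / σ l))
          = pol z l * (a * (|z.1 l - θ l| / σ l) / ((z.2 l : ℝ) + 1)) := by
        ring
      have i6 : a * (ε * (1 - s) * (|z.1 l - θ l| / σ l))
          = a * (ε * (1 - s)) * (|z.1 l - θ l| / σ l) := by ring
      rw [i5, i6] at i4
      -- second : 1/(n+1) ≤ 1/(1+ν0)
      have j1 : (1:ℝ) + (ν0 l : ℝ) ≤ (z.2 l : ℝ) + 1 := by
        have : (ν0 l : ℝ) ≤ (z.2 l : ℝ) := Nat.cast_le.mpr (hz1 l)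
        linarith
      have j2 : a / ((z.2 l : ℝ) + 1) ≤ a / (1 + (ν0 l : ℝ)) :=
        div_le_div_of_nonneg_left ha (by positivity) j1
      have j3 := mul_le_mul_of_nonneg_left j2 (hp0 l)
      have j4 : pol z l * (a / (1 + (ν0 l : ℝ))) = a * (pol z l / (1 + (ν0 l : ℝ))) := by
        ring
      rw [j4] at j3
      have hkey := mul_le_mul_of_nonneg_left (key l) (hp0 l)
      have hexp : pol z l * (1 + a * W - a * (|z.1 l - θ l| / σ l) / ((z.2 l : ℝ) + 1)
            + a / ((z.2 l : ℝ) + 1) + A * ((T:ℝ) - Sr - c))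
          = pol z l * (1 + a * W + A * ((T:ℝ) - Sr - c))
            - pol z l * (a * (|z.1 l - θ l| / σ l) / ((z.2 l : ℝ) + 1))
            + pol z l * (a / ((z.2 l : ℝ) + 1)) := by ring
      rw [hexp] at hkey
      linarith
    -- sum up
    have hsum_le : ∫ z', V z' ∂(step z)
        ≤ 1 + a * W + A * ((T:ℝ) - Sr - c) - a * (ε * (1 - s)) * W
          + a * ∑ dd, pol z dd / (1 + (ν0 dd : ℝ)) := by
      rw [hsplit]
      calc ∑ l, pol z l * ∫ y, V (nextState M T ν0 z l y) ∂(F l)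
          ≤ ∑ l, (pol z l * (1 + a * W + A * ((T:ℝ) - Sr - c))
            - a * (ε * (1 - s)) * (|z.1 l - θ l| / σ l)
            + a * (pol z l / (1 + (ν0 l : ℝ)))) :=
            Finset.sum_le_sum fun l _ => key2 l
        _ = (∑ l, pol z l) * (1 + a * W + A * ((T:ℝ) - Sr - c))
            - a * (ε * (1 - s)) * W
            + a * ∑ dd, pol z dd / (1 + (ν0 dd : ℝ)) := by
            rw [Finset.sum_add_distrib, Finset.sum_sub_distrib, ← Finset.sum_mul,
              ← Finset.mul_sum, ← Finset.mul_sum, hWdef]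
        _ = 1 + a * W + A * ((T:ℝ) - Sr - c) - a * (ε * (1 - s)) * W
            + a * ∑ dd, pol z dd / (1 + (ν0 dd : ℝ)) := by
            rw [hpol1 z]; ring
    -- final algebra
    have hAc : A * ((T:ℝ) - Sr - c) ≤ m * (A * ((T:ℝ) - Sr)) := by
      by_cases hST : Sn < T
      · have hc1 : (c:ℝ) = 1 := by rw [hcdef]; simp [hST]
        have hSrT1 : Sr ≤ (T:ℝ) - 1 := by
          rw [hSr]
          have h1 : Sn + 1 ≤ T := hST
          have h2 : (Sn:ℝ) + 1 ≤ (T:ℝ) := by exact_mod_cast h1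
          linarith
        have h1 : (T:ℝ) - Sr - 1 ≤ ((T:ℝ) - 1) / T * ((T:ℝ) - Sr) := by
          rw [div_mul_eq_mul_div, le_div_iff₀ hT0]
          nlinarith
        have h2 : ((T:ℝ) - 1) / T * ((T:ℝ) - Sr) ≤ m * ((T:ℝ) - Sr) :=
          mul_le_mul_of_nonneg_right hTm (by linarith)
        have h3 : (T:ℝ) - Sr - (c:ℝ) ≤ m * ((T:ℝ) - Sr) := by rw [hc1]; linarith
        calc A * ((T:ℝ) - Sr - c) ≤ A * (m * ((T:ℝ) - Sr)) :=
              mul_le_mul_of_nonneg_left h3 hA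
          _ = m * (A * ((T:ℝ) - Sr)) := by ring
      · have hc0 : (c:ℝ) = 0 := by rw [hcdef]; simp [hST]
        have hSrT' : Sr = (T:ℝ) := by
          rw [hSr]
          have : Sn = T := le_antisymm hSnT (not_lt.mp hST)
          rw [this]
        rw [hc0, hSrT']
        simp
    have hmγ : γfun z * (a * W) ≤ m * (a * W) :=
      mul_le_mul_of_nonneg_right hγm (mul_nonneg ha hW0)
    have hγs : ε * (1 - s) = 1 - γfun z := by rw [hγz]; ring
    refine ⟨?_, bullet2, bullet3⟩
    rw [hVz]
    have hfin : 1 + a * W + A * ((T:ℝ) - Sr - c) - a * (ε * (1 - s)) * W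
        ≤ m * (1 + a * W + A * ((T:ℝ) - Sr)) + 1 - γfun z := by
      have e1 : a * (ε * (1 - s)) * W = (1 - γfun z) * (a * W) := by
        rw [hγs]; ring
      rw [e1]
      nlinarith [hmγ, hAc, hγm, mul_nonneg ha hW0]
    linarith
  · -- the non-integrable case : the integral is zero
    rw [integral_undef hInt]
    refine ⟨?_, bullet2, bullet3⟩
    have h1 : γfun z * 1 ≤ m * V z := mul_le_mul hγm hVz1 zero_le_one hm0
    linarith
end
end
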